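/- arXiv:2502.13066 — 6 statements merged into one kernel-verified Lean document; each statement's English description precedes it below -/
import Mathlib

section
/- Let n ≥ 2 and let A = {a₁,…,aₘ} be a set of nonnegative integers with a₁ = 0. Define F = {fᵢ(x) = n·x + aᵢ : i = 1,…,m}. Then every nonnegative integer has at most one A-expansion (i.e., at most one representation k = Σⱼ αⱼ nʲ with digits αⱼ ∈ A and leading digit nonzero) if and only if F generates a free semigroup under composition (distinct finite composition sequences give distinct functions). -/
/-- `l` is an `A`-expansion of `k` in base `n`: all digits in `A`, nonzero leading digit,
and value `k`. The empty list is the expansion of `0`. -/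
def IsExpansion (n : ℕ) (A : Finset ℕ) (k : ℕ) (l : List ℕ) : Prop :=
  (∀ d ∈ l, d ∈ A) ∧ l.getLast? ≠ some 0 ∧ Nat.ofDigits n l = k

/-- Every nonnegative integer has at most one `A`-expansion in base `n`. -/
def UniqueExpansions (n : ℕ) (A : Finset ℕ) : Prop :=
  ∀ k : ℕ, ∀ l₁ l₂ : List ℕ, IsExpansion n A k l₁ → IsExpansion n A k l₂ → l₁ = l₂

/-- The family `f` generates a free semigroup under composition: distinct nonempty
words give distinct composed functions. Composition is left-to-right:
`[u₁,…,u_p] ↦ f u₁ ∘ ⋯ ∘ f u_p`. -/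
def FreeComp {α ι : Type*} (f : ι → α → α) : Prop :=
  ∀ w₁ w₂ : List ι, w₁ ≠ [] → w₂ ≠ [] →
    (w₁.map f).foldr (· ∘ ·) id = (w₂.map f).foldr (· ∘ ·) id → w₁ = w₂



/-!
Composing the maps `x ↦ n x + aᵢ` along a word `u₁ ⋯ u_p` gives `x ↦ nᵖ x + Σⱼ a_{uⱼ} nʲ⁻¹`,
so (as `n ≥ 2`) two words give the same map iff they have the same length and the same digit
value. Freeness therefore says that digit strings over `A` of equal length and equal value
coincide. Since `0 ∈ A`, padding the shorter of two expansions with zeros and stripping trailing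
zeros translate this back and forth into uniqueness of `A`-expansions.
-/

def UniquePaddedExpansions (n : ℕ) (A : Finset ℕ) : Prop :=
  ∀ l₁ l₂ : List ℕ, (∀ d ∈ l₁, d ∈ A) → (∀ d ∈ l₂, d ∈ A) →
    l₁.length = l₂.length → Nat.ofDigits n l₁ = Nat.ofDigits n l₂ → l₁ = l₂

namespace List

theorem exists_eq_append_replicate_zero (l : List ℕ) :
    ∃ l' r, l = l' ++ replicate r 0 ∧ l'.getLast? ≠ some 0 := by
  induction l using reverseRecOn with
  | nil => exact ⟨[], 0, rfl, by simp⟩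
  | append_singleton xs x ih =>
    rcases eq_or_ne x 0 with rfl | hx
    · obtain ⟨l', r, rfl, hl'⟩ := ih
      exact ⟨l', r + 1, by simp [replicate_succ'], hl'⟩
    · exact ⟨xs ++ [x], 0, by simp, by simpa using hx⟩

theorem eq_zero_of_getLast?_append_replicate_zero {l : List ℕ} {r : ℕ}
    (h : (l ++ replicate r 0).getLast? ≠ some 0) : r = 0 := by
  obtain _ | r := r
  · rfl
  · simp [replicate_succ', ← append_assoc] at h

end List

theorem uniqueExpansions_iff_uniquePaddedExpansions {n : ℕ} {A : Finset ℕ} (hA : 0 ∈ A) :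
    UniqueExpansions n A ↔ UniquePaddedExpansions n A := by
  constructor
  · intro h l₁ l₂ hl₁ hl₂ hlen hval
    obtain ⟨l₁', r₁, rfl, hlast₁⟩ := l₁.exists_eq_append_replicate_zero
    obtain ⟨l₂', r₂, rfl, hlast₂⟩ := l₂.exists_eq_append_replicate_zero
    rw [Nat.ofDigits_append_replicate_zero, Nat.ofDigits_append_replicate_zero] at hval
    have hl' : l₁' = l₂' :=
      h _ _ _ ⟨fun d hd => hl₁ d (by simp [hd]), hlast₁, rfl⟩
        ⟨fun d hd => hl₂ d (by simp [hd]), hlast₂, hval.symm⟩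
    subst hl'
    simp only [List.length_append, List.length_replicate, Nat.add_left_cancel_iff] at hlen
    rw [hlen]
  · intro h k l₁ l₂ hl₁ hl₂
    wlog hle : l₁.length ≤ l₂.length generalizing l₁ l₂
    · exact (this l₂ l₁ hl₂ hl₁ (le_of_not_ge hle)).symm
    obtain ⟨hA₁, -, hval₁⟩ := hl₁
    obtain ⟨hA₂, hlast₂, hval₂⟩ := hl₂
    have hpad : l₁ ++ List.replicate (l₂.length - l₁.length) 0 = l₂ := by
      refine h _ _ ?_ hA₂ (by simp only [List.length_append, List.length_replicate]; omega)
        (by rw [Nat.ofDigits_append_replicate_zero, hval₁, hval₂])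
      intro d hd
      rcases List.mem_append.mp hd with hd | hd
      · exact hA₁ d hd
      · rwa [List.eq_of_mem_replicate hd]
    rw [← hpad] at hlast₂
    rwa [List.eq_zero_of_getLast?_append_replicate_zero hlast₂, List.replicate_zero,
      List.append_nil] at hpad

section AffineMaps

variable {ι : Type*} (n : ℕ) (a : ι → ℕ)

theorem foldr_comp_affine_apply (w : List ι) (x : ℤ) :
    (w.map (fun i (x : ℤ) => (n : ℤ) * x + (a i : ℤ))).foldr (· ∘ ·) id x
      = (n : ℤ) ^ w.length * x + ((Nat.ofDigits n (w.map a) : ℕ) : ℤ) := by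
  induction w generalizing x with
  | nil => simp
  | cons u w ih =>
    simp only [List.map_cons, List.foldr_cons, Function.comp_apply, ih, List.length_cons,
      Nat.ofDigits_cons]
    push_cast
    ring

variable {n}

theorem foldr_comp_affine_eq_iff (hn : 2 ≤ n) (w₁ w₂ : List ι) :
    (w₁.map (fun i (x : ℤ) => (n : ℤ) * x + (a i : ℤ))).foldr (· ∘ ·) id
        = (w₂.map (fun i (x : ℤ) => (n : ℤ) * x + (a i : ℤ))).foldr (· ∘ ·) id ↔
      w₁.length = w₂.length ∧ Nat.ofDigits n (w₁.map a) = Nat.ofDigits n (w₂.map a) := by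
  constructor
  · intro h
    have h0 := congrFun h 0
    have h1 := congrFun h 1
    simp only [foldr_comp_affine_apply, mul_zero, zero_add, mul_one] at h0 h1
    have hval : Nat.ofDigits n (w₁.map a) = Nat.ofDigits n (w₂.map a) := by exact_mod_cast h0
    have hpow : n ^ w₁.length = n ^ w₂.length := by
      rw [h0] at h1
      exact_mod_cast add_right_cancel h1
    exact ⟨Nat.pow_right_injective hn hpow, hval⟩
  · rintro ⟨hlen, hval⟩
    funext x
    rw [foldr_comp_affine_apply, foldr_comp_affine_apply, hlen, hval]

theorem uniquePaddedExpansions_iff_freeComp [Fintype ι] (hn : 2 ≤ n)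
    (ha : Function.Injective a) :
    UniquePaddedExpansions n (Finset.image a Finset.univ) ↔
      FreeComp (fun i (x : ℤ) => (n : ℤ) * x + (a i : ℤ)) := by
  have digits_iff (l : List ℕ) :
      (∀ d ∈ l, d ∈ Finset.image a Finset.univ) ↔ l ∈ Set.range (List.map a) := by
    simp [Set.range_list_map]
  constructor
  · intro h w₁ w₂ _ _ hcomp
    obtain ⟨hlen, hval⟩ := (foldr_comp_affine_eq_iff a hn w₁ w₂).mp hcomp
    refine List.map_injective_iff.mpr ha (h _ _ ?_ ?_ (by simpa using hlen) hval)
    · exact (digits_iff _).mpr ⟨w₁, rfl⟩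
    · exact (digits_iff _).mpr ⟨w₂, rfl⟩
  · intro h l₁ l₂ hl₁ hl₂ hlen hval
    obtain ⟨w₁, rfl⟩ := (digits_iff l₁).mp hl₁
    obtain ⟨w₂, rfl⟩ := (digits_iff l₂).mp hl₂
    rw [List.length_map, List.length_map] at hlen
    rcases eq_or_ne w₁ [] with rfl | hw₁
    · obtain rfl := List.length_eq_zero_iff.mp (hlen.symm : w₂.length = 0)
      rfl
    · have hw₂ : w₂ ≠ [] := List.ne_nil_of_length_pos (hlen ▸ List.length_pos_of_ne_nil hw₁)
      rw [h w₁ w₂ hw₁ hw₂ ((foldr_comp_affine_eq_iff a hn w₁ w₂).mpr ⟨hlen, hval⟩)]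

end AffineMaps

theorem stmt0 (n m : ℕ) (hn : 2 ≤ n) (a : Fin m → ℕ) (ha : Function.Injective a)
    (h0 : ∃ i, a i = 0) :
    UniqueExpansions n (Finset.image a Finset.univ) ↔
      FreeComp (fun (i : Fin m) (x : ℤ) => (n : ℤ) * x + (a i : ℤ)) := by
  have hA : 0 ∈ Finset.image a Finset.univ := by simpa using h0
  exact (uniqueExpansions_iff_uniquePaddedExpansions hA).trans
    (uniquePaddedExpansions_iff_freeComp a hn ha)
end

section
/- Let n ≥ 2 and A ⊆ ℕ a finite digit set with 0 ∈ A. For integers k define b(k) as the number of A-expansions of k (tuples (α₀,…,α_J) with αⱼ ∈ A, α_J ≠ 0, k = Σ αⱼ nʲ), with b(k) = 0 for k < 0 and b(0) = 1. Let cᵢ = 1 if i ∈ A and 0 otherwise. Then for all q ≥ 0 and 0 ≤ d ≤ n−1: b(n·q + d) = Σ_{s ∈ ℤ} c_{n·s + d} · b(q − s). -/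
/-- Number of `A`-expansions of the integer `k` (zero for negative `k`;
the empty expansion gives `bcount n A 0 = 1`). -/
noncomputable def bcount (n : ℕ) (A : Finset ℕ) (k : ℤ) : ℕ :=
  Set.ncard {l : List ℕ |
    (∀ d ∈ l, d ∈ A) ∧ l.getLast? ≠ some 0 ∧ (Nat.ofDigits n l : ℤ) = k}

/-- Indicator sequence of `A`, indexed by `ℤ`. -/
def ind (A : Finset ℕ) (i : ℤ) : ℕ := if 0 ≤ i ∧ i.toNat ∈ A then 1 else 0

open Function

variable {n : ℕ} {A : Finset ℕ}

def expansions (n : ℕ) (A : Finset ℕ) (k : ℤ) : Set (List ℕ) :=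
  {l | (∀ a ∈ l, a ∈ A) ∧ l.getLast? ≠ some 0 ∧ (Nat.ofDigits n l : ℤ) = k}

def digitShifts (n : ℕ) (A : Finset ℕ) (d : ℤ) : Set ℤ :=
  {s | 0 ≤ (n : ℤ) * s + d ∧ ((n : ℤ) * s + d).toNat ∈ A}

lemma bcount_eq_ncard (k : ℤ) : bcount n A k = (expansions n A k).ncard := rfl

lemma getLast?_cons_ne_some_zero {a : ℕ} {t : List ℕ} :
    (a :: t).getLast? ≠ some 0 ↔ t.getLast? ≠ some 0 ∧ (t = [] → a ≠ 0) := by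
  cases t <;> simp

lemma length_le_ofDigits (hn : 2 ≤ n) {l : List ℕ} (hl : l.getLast? ≠ some 0) :
    l.length ≤ Nat.ofDigits n l := by
  induction l with
  | nil => simp
  | cons a t ih =>
    obtain ⟨ht, ha⟩ := getLast?_cons_ne_some_zero.1 hl
    rcases eq_or_ne t [] with rfl | hne
    · simpa [Nat.one_le_iff_ne_zero] using ha
    · have := ih ht
      have : 1 ≤ t.length := List.length_pos_iff.2 hne
      simp only [Nat.ofDigits, List.length_cons]
      nlinarith

lemma expansions_finite (hn : 2 ≤ n) (A : Finset ℕ) (k : ℤ) : (expansions n A k).Finite := by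
  have hsub : expansions n A k ⊆
      List.map Subtype.val '' {l : List A | l.length ≤ k.toNat} := by
    rintro l ⟨hA, hl, hk⟩
    refine ⟨l.attach.map fun a => ⟨a.1, hA a.1 a.2⟩, ?_, by simp⟩
    have := length_le_ofDigits hn hl
    rw [← Nat.coe_ofDigits] at hk
    simp only [Set.mem_ofPred_eq, List.length_map, List.length_attach]
    omega
  exact ((List.finite_length_le A k.toNat).image _).subset hsub

lemma expansions_of_neg {k : ℤ} (hk : k < 0) : expansions n A k = ∅ := by
  refine Set.eq_empty_of_forall_notMem fun l ⟨_, _, hl⟩ => ?_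
  rw [← Nat.coe_ofDigits] at hl
  omega

lemma expansions_zero (hn : 2 ≤ n) : expansions n A 0 = {[]} := by
  refine Set.eq_singleton_iff_unique_mem.2
    ⟨by simp [expansions, Nat.ofDigits], fun l ⟨_, hl, h0⟩ => ?_⟩
  have := length_le_ofDigits hn hl
  rw [← Nat.coe_ofDigits] at h0
  exact List.eq_nil_of_length_eq_zero (by omega)

lemma bcount_of_neg {k : ℤ} (hk : k < 0) : bcount n A k = 0 := by
  rw [bcount_eq_ncard, expansions_of_neg hk, Set.ncard_empty]

lemma bcount_zero (hn : 2 ≤ n) : bcount n A 0 = 1 := by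
  rw [bcount_eq_ncard, expansions_zero hn, Set.ncard_singleton]

lemma digitShifts_finite (hn : n ≠ 0) (A : Finset ℕ) (d : ℤ) : (digitShifts n A d).Finite := by
  have hinj : Injective fun s : ℤ => (n : ℤ) * s + d := fun s t h => by
    simpa [hn] using h
  refine ((A.finite_toSet.image ((↑) : ℕ → ℤ)).preimage hinj.injOn).subset ?_
  rintro s ⟨hs, hA⟩
  exact ⟨_, hA, Int.toNat_of_nonneg hs⟩

lemma pairwiseDisjoint_image_cons (hn : n ≠ 0) (A : Finset ℕ) (d : ℤ) (f : ℤ → Set (List ℕ)) :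
    (digitShifts n A d).PairwiseDisjoint fun s => List.cons ((n : ℤ) * s + d).toNat '' f s := by
  rintro s ⟨hs, -⟩ t ⟨ht, -⟩ hst
  refine Set.disjoint_left.2 ?_
  rintro _ ⟨u, -, rfl⟩ ⟨v, -, huv⟩
  have : (n : ℤ) * t + d = (n : ℤ) * s + d := by
    have := (List.cons_eq_cons.1 huv).1
    omega
  exact hst (by simpa [hn] using this.symm)

lemma expansions_mul_add {q d : ℤ} (hk : (n : ℤ) * q + d ≠ 0) :
    expansions n A ((n : ℤ) * q + d) =
      ⋃ s ∈ digitShifts n A d, List.cons ((n : ℤ) * s + d).toNat '' expansions n A (q - s) := by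
  ext l
  simp only [Set.mem_iUnion, Set.mem_image, exists_prop]
  constructor
  · rintro ⟨hA, hl, hval⟩
    obtain ⟨a, t, rfl⟩ : ∃ a t, l = a :: t := by
      cases l with
      | nil => exact absurd hval.symm (by simpa [Nat.ofDigits] using hk)
      | cons a t => exact ⟨a, t, rfl⟩
    simp only [Nat.ofDigits] at hval
    have ha : (n : ℤ) * (q - Nat.ofDigits (n : ℤ) t) + d = a := by linear_combination -hval
    refine ⟨q - Nat.ofDigits (n : ℤ) t, ⟨by omega, by simpa [ha] using hA a (by simp)⟩, t,
      ⟨fun b hb => hA b (by simp [hb]), (getLast?_cons_ne_some_zero.1 hl).1, by ring⟩, by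
        simp [ha]⟩
  · rintro ⟨s, ⟨hs, hsA⟩, t, ⟨hA, ht, hval⟩, rfl⟩
    refine ⟨?_, getLast?_cons_ne_some_zero.2 ⟨ht, ?_⟩, ?_⟩
    · simpa [hsA] using hA
    · rintro rfl
      simp only [Nat.ofDigits] at hval
      have hsq : s = q := by linarith
      subst hsq
      omega
    · rw [Nat.ofDigits, hval]
      push_cast [Int.toNat_of_nonneg hs]
      ring

lemma finsum_ind_mul (n : ℕ) (A : Finset ℕ) (d : ℤ) (f : ℤ → ℕ) :
    ∑ᶠ s, ind A ((n : ℤ) * s + d) * f s = ∑ᶠ s ∈ digitShifts n A d, f s := by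
  rw [finsum_mem_def]
  refine finsum_congr fun s => ?_
  by_cases hs : 0 ≤ (n : ℤ) * s + d ∧ ((n : ℤ) * s + d).toNat ∈ A
  · rw [Set.indicator_of_mem (s := digitShifts n A d) hs, ind, if_pos hs, one_mul]
  · rw [Set.indicator_of_notMem (s := digitShifts n A d) hs, ind, if_neg hs, zero_mul]

lemma bcount_mul_add (hn : 2 ≤ n) {q d : ℤ} (hk : (n : ℤ) * q + d ≠ 0) :
    bcount n A ((n : ℤ) * q + d) = ∑ᶠ s ∈ digitShifts n A d, bcount n A (q - s) := by
  rw [bcount_eq_ncard, expansions_mul_add hk,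
    (digitShifts_finite (by omega) A d).ncard_biUnion
      (fun s _ => (expansions_finite hn A _).image _)
      (pairwiseDisjoint_image_cons (by omega) A d _)]
  exact finsum_mem_congr rfl fun s _ => Set.ncard_image_of_injective _ List.cons_injective

theorem stmt3_general (n : ℕ) (hn : 2 ≤ n) (A : Finset ℕ) (h0 : 0 ∈ A)
    (q d : ℤ) :
    bcount n A ((n : ℤ) * q + d) =
      ∑ᶠ s : ℤ, ind A ((n : ℤ) * s + d) * bcount n A (q - s) := by
  rcases ne_or_eq ((n : ℤ) * q + d) 0 with hk | hk
  · rw [finsum_ind_mul, bcount_mul_add hn hk]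
  -- only `s = q` contributes: for `s < q` the digit `n * (s - q)` is negative,
  -- for `s > q` so is `q - s`
  rw [finsum_eq_single _ q fun s hs => ?_]
  · simp [hk, ind, h0, bcount_zero hn]
  rcases lt_or_gt_of_ne hs with hs | hs
  · have : (n : ℤ) * s + d < 0 := by nlinarith
    simp [ind, this.not_ge]
  · simp [bcount_of_neg (show q - s < 0 by omega)]

theorem stmt3 (n : ℕ) (hn : 2 ≤ n) (A : Finset ℕ) (h0 : 0 ∈ A)
    (q d : ℤ) (hq : 0 ≤ q) (hd0 : 0 ≤ d) (hd : d ≤ (n : ℤ) - 1) :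
    bcount n A ((n : ℤ) * q + d) =
      ∑ᶠ s : ℤ, ind A ((n : ℤ) * s + d) * bcount n A (q - s) :=
  stmt3_general n hn A h0 q d
end

section
/- Let n = n₁·n₂ with integers n₁, n₂ > 1, and let A = {u·n₁·n + v : 0 ≤ u < n₂, 0 ≤ v < n₁}. Then A is a set of n nonnegative integers, contains 0 and 1, and every nonnegative integer has at most one A-expansion in base n (uniqueness property holds). -/
lemma ofDigits_ne_zero' (n : ℕ) (hn : 0 < n) (l : List ℕ) (hl : l ≠ [])
    (h : l.getLast? ≠ some 0) : Nat.ofDigits n l ≠ 0 := by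
  induction l with
  | nil => simp at hl
  | cons d t ih =>
    rw [Nat.ofDigits_cons]
    cases t with
    | nil =>
      simp only [List.getLast?_singleton, ne_eq, Option.some.injEq] at h
      simpa using h
    | cons e s =>
      intro hz
      have hd : d = 0 := by omega
      have hr : Nat.ofDigits n (e :: s) = 0 := by
        by_contra h'
        have := Nat.mul_pos hn (Nat.pos_of_ne_zero h')
        omega
      have h' : (e :: s).getLast? ≠ some 0 := by
        rwa [List.getLast?_cons_cons] at h
      exact ih (by simp) h' hr

/-- If all digits of `t` are of the form `u·n₁·n + v` with `v < n₁`, then the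
residue of the value mod `n = n₁·n₂` is `< n₁`. -/
lemma mod_lt_n1 (n₁ n₂ : ℕ) (h₁ : 1 < n₁) (h₂ : 1 < n₂) (t : List ℕ)
    (ht : ∀ d ∈ t, ∃ u v, u < n₂ ∧ v < n₁ ∧ d = u * n₁ * (n₁ * n₂) + v) :
    Nat.ofDigits (n₁ * n₂) t % (n₁ * n₂) < n₁ := by
  have hnpos : 0 < n₁ * n₂ := by positivity
  cases t with
  | nil => simp only [Nat.ofDigits_nil, Nat.zero_mod]; omega
  | cons d s =>
    obtain ⟨u, v, hu, hv, hd⟩ := ht d (by simp)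
    rw [Nat.ofDigits_cons, hd]
    have : u * n₁ * (n₁ * n₂) + v + (n₁ * n₂) * Nat.ofDigits (n₁ * n₂) s
        = v + (n₁ * n₂) * (u * n₁ + Nat.ofDigits (n₁ * n₂) s) := by ring
    rw [this, Nat.add_mul_mod_self_left, Nat.mod_eq_of_lt (by nlinarith)]
    exact hv

set_option maxHeartbeats 1600000 in
theorem stmt6 (n₁ n₂ : ℕ) (h₁ : 1 < n₁) (h₂ : 1 < n₂) (n : ℕ) (hn : n = n₁ * n₂)
    (A : Finset ℕ)
    (hA : A = (Finset.range n₂ ×ˢ Finset.range n₁).image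
      (fun p => p.1 * n₁ * n + p.2)) :
    A.card = n ∧ 0 ∈ A ∧ 1 ∈ A ∧ UniqueExpansions n A := by
  subst hn hA
  have hnpos : 0 < n₁ * n₂ := by positivity
  have memA : ∀ d, d ∈ (Finset.range n₂ ×ˢ Finset.range n₁).image
      (fun p => p.1 * n₁ * (n₁ * n₂) + p.2) ↔
      ∃ u v, u < n₂ ∧ v < n₁ ∧ d = u * n₁ * (n₁ * n₂) + v := by
    intro d
    simp only [Finset.mem_image, Finset.mem_product, Finset.mem_range, Prod.exists]
    constructor
    · rintro ⟨u, v, ⟨hu, hv⟩, h⟩; exact ⟨u, v, hu, hv, h.symm⟩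
    · rintro ⟨u, v, hu, hv, h⟩; exact ⟨u, v, ⟨hu, hv⟩, h.symm⟩
  refine ⟨?_, ?_, ?_, ?_⟩
  · rw [Finset.card_image_of_injOn, Finset.card_product, Finset.card_range,
      Finset.card_range, Nat.mul_comm]
    rintro ⟨u, v⟩ huv ⟨u', v'⟩ huv' h
    simp only [Finset.mem_coe, Finset.mem_product, Finset.mem_range] at huv huv'
    simp only at h
    have hv : v < n₁ := huv.2
    have hv' : v' < n₁ := huv'.2
    have hle : n₁ ≤ n₁ * (n₁ * n₂) := Nat.le_mul_of_pos_right _ hnpos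
    have : u = u' := by
      by_contra hne
      rcases Nat.lt_or_ge u u' with hlt | hge
      · have : u * n₁ * (n₁ * n₂) + n₁ * (n₁ * n₂) ≤ u' * n₁ * (n₁ * n₂) := by
          nlinarith
        omega
      · have hlt : u' < u := by omega
        have : u' * n₁ * (n₁ * n₂) + n₁ * (n₁ * n₂) ≤ u * n₁ * (n₁ * n₂) := by
          nlinarith
        omega
    subst this
    have : v = v' := by omega
    simp [this]
  · rw [memA]; exact ⟨0, 0, by omega, by omega, by ring⟩
  · rw [memA]; exact ⟨0, 1, by omega, h₁, by ring⟩
  · intro k l₁ l₂ he₁ he₂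
    induction l₁ generalizing k l₂ with
    | nil =>
      obtain ⟨_, _, hv₁⟩ := he₁
      obtain ⟨hd₂, hl₂, hv₂⟩ := he₂
      simp only [Nat.ofDigits_nil] at hv₁
      cases l₂ with
      | nil => rfl
      | cons d t =>
        exact absurd (hv₂.trans hv₁.symm)
          (ofDigits_ne_zero' _ hnpos _ (by simp) hl₂)
    | cons d₁ t₁ ih =>
      obtain ⟨hd₁, hl₁, hv₁⟩ := he₁
      obtain ⟨hd₂, hl₂, hv₂⟩ := he₂
      cases l₂ with
      | nil =>
        simp only [Nat.ofDigits_nil] at hv₂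
        exact absurd (hv₁.trans hv₂.symm)
          (ofDigits_ne_zero' _ hnpos _ (by simp) hl₁)
      | cons d₂ t₂ =>
        obtain ⟨u, v, hu, hv, hd⟩ := (memA d₁).1 (hd₁ d₁ (by simp))
        obtain ⟨u', v', hu', hv', hd'⟩ := (memA d₂).1 (hd₂ d₂ (by simp))
        rw [Nat.ofDigits_cons] at hv₁ hv₂
        set r₁ := Nat.ofDigits (n₁ * n₂) t₁ with hr₁
        set r₂ := Nat.ofDigits (n₁ * n₂) t₂ with hr₂
        -- step 1: v = v' by looking mod n
        have hkmod : ∀ (u v : ℕ) (r : ℕ), v < n₁ →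
            (u * n₁ * (n₁ * n₂) + v + (n₁ * n₂) * r) % (n₁ * n₂) = v := by
          intro u v r hvlt
          have : u * n₁ * (n₁ * n₂) + v + (n₁ * n₂) * r
              = v + (n₁ * n₂) * (u * n₁ + r) := by ring
          rw [this, Nat.add_mul_mod_self_left, Nat.mod_eq_of_lt (by nlinarith)]
        have hvv : v = v' := by
          have e1 := hkmod u v r₁ hv
          have e2 := hkmod u' v' r₂ hv'
          rw [hd] at hv₁; rw [hd'] at hv₂
          rw [hv₁] at e1; rw [hv₂] at e2
          omega
        -- step 2: u*n₁ + r₁ = u'*n₁ + r₂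
        have hm : u * n₁ + r₁ = u' * n₁ + r₂ := by
          rw [hd] at hv₁; rw [hd'] at hv₂
          have a1 : v + (n₁ * n₂) * (u * n₁ + r₁) = k := by rw [← hv₁]; ring
          have a2 : v' + (n₁ * n₂) * (u' * n₁ + r₂) = k := by rw [← hv₂]; ring
          have e : (n₁ * n₂) * (u * n₁ + r₁) = (n₁ * n₂) * (u' * n₁ + r₂) := by
            rw [hvv] at a1; linarith
          exact Nat.eq_of_mul_eq_mul_left hnpos e
        -- step 3: u = u' by looking at m mod n, using r % n < n₁
        have hr1lt : r₁ % (n₁ * n₂) < n₁ :=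
          mod_lt_n1 n₁ n₂ h₁ h₂ t₁ (fun d hd => (memA d).1 (hd₁ d (by simp [hd])))
        have hr2lt : r₂ % (n₁ * n₂) < n₁ :=
          mod_lt_n1 n₁ n₂ h₁ h₂ t₂ (fun d hd => (memA d).1 (hd₂ d (by simp [hd])))
        have hmodeq : ∀ (u r : ℕ), u < n₂ → r % (n₁ * n₂) < n₁ →
            (u * n₁ + r) % (n₁ * n₂) = u * n₁ + r % (n₁ * n₂) := by
          intro u r hu hrlt
          conv_lhs => rw [← Nat.div_add_mod r (n₁ * n₂)]
          have : u * n₁ + ((n₁ * n₂) * (r / (n₁ * n₂)) + r % (n₁ * n₂))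
              = (u * n₁ + r % (n₁ * n₂)) + (n₁ * n₂) * (r / (n₁ * n₂)) := by ring
          rw [this, Nat.add_mul_mod_self_left, Nat.mod_eq_of_lt (by nlinarith)]
        have huu : u = u' := by
          have e1 := hmodeq u r₁ hu hr1lt
          have e2 := hmodeq u' r₂ hu' hr2lt
          rw [hm] at e1
          have key : u * n₁ + r₁ % (n₁ * n₂) = u' * n₁ + r₂ % (n₁ * n₂) :=
            e1.symm.trans e2
          have b1 : u * n₁ < (u' + 1) * n₁ := calc
            u * n₁ ≤ u * n₁ + r₁ % (n₁ * n₂) := Nat.le_add_right _ _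
            _ = u' * n₁ + r₂ % (n₁ * n₂) := key
            _ < u' * n₁ + n₁ := Nat.add_lt_add_left hr2lt _
            _ = (u' + 1) * n₁ := by ring
          have b2 : u' * n₁ < (u + 1) * n₁ := calc
            u' * n₁ ≤ u' * n₁ + r₂ % (n₁ * n₂) := Nat.le_add_right _ _
            _ = u * n₁ + r₁ % (n₁ * n₂) := key.symm
            _ < u * n₁ + n₁ := Nat.add_lt_add_left hr1lt _
            _ = (u + 1) * n₁ := by ring
          have c1 := Nat.lt_of_mul_lt_mul_right b1
          have c2 := Nat.lt_of_mul_lt_mul_right b2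
          omega
        -- conclude r₁ = r₂, digits equal
        have hrr : r₁ = r₂ := by rw [huu] at hm; omega
        have hdd : d₁ = d₂ := by rw [hd, hd', hvv, huu]
        -- recurse on tails
        cases t₁ with
        | nil =>
          cases t₂ with
          | nil => rw [hdd]
          | cons e s =>
            exfalso
            have hne : r₂ ≠ 0 := ofDigits_ne_zero' _ hnpos _ (by simp)
              (by rwa [List.getLast?_cons_cons] at hl₂)
            rw [Nat.ofDigits_nil] at hr₁
            omega
        | cons e s =>
          cases t₂ with
          | nil =>
            exfalso
            have hne : r₁ ≠ 0 := ofDigits_ne_zero' _ hnpos _ (by simp)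
              (by rwa [List.getLast?_cons_cons] at hl₁)
            rw [Nat.ofDigits_nil] at hr₂
            omega
          | cons e' s' =>
            have htail : (e :: s) = (e' :: s') := by
              apply ih r₁
              · exact ⟨fun d hd => hd₁ d (by simp [hd]),
                  by rwa [List.getLast?_cons_cons] at hl₁, rfl⟩
              · exact ⟨fun d hd => hd₂ d (by simp [hd]),
                  by rwa [List.getLast?_cons_cons] at hl₂, hrr.symm⟩
            rw [hdd, htail]
end

section
/- Let n = n₁·n₂ with n₁, n₂ > 1 and A = {u·n₁·n + v : 0 ≤ u < n₂, 0 ≤ v < n₁}. If y and y′ are nonnegative integers each representable in base n with digits from A (i.e., each admits an A-expansion), then y − y′ ≢ u·n₁ (mod n) for every u with 1 ≤ u < n₂. -/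
/-- `k` is representable in base `n` with digits from `A`. -/
def Representable (n : ℕ) (A : Finset ℕ) (k : ℕ) : Prop :=
  ∃ l : List ℕ, IsExpansion n A k l

/- Every digit `u * n₁ * n + v` of `A` is `≡ v (mod n)` with `v < n₁`, and a representable number
is congruent modulo `n` to its lowest digit, so its residue mod `n` lies in `[0, n₁)`.
Two such residues differ by less than `n₁`, whereas `u * n₁` with `1 ≤ u < n₂` keeps a gap of at
least `n₁` from both `0` and `n = n₁ * n₂`. -/

lemma mod_lt_of_mem_image_mul_add {n₁ n₂ n d : ℕ}
    (hd : d ∈ (Finset.range n₂ ×ˢ Finset.range n₁).image (fun p => p.1 * n₁ * n + p.2)) :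
    d % n < n₁ := by
  obtain ⟨⟨u, v⟩, hp, rfl⟩ := Finset.mem_image.mp hd
  have hv : v < n₁ := (Finset.mem_range.mp (Finset.mem_product.mp hp).2)
  calc (u * n₁ * n + v) % n = v % n := by rw [Nat.mul_comm _ n, Nat.mul_add_mod]
    _ ≤ v := Nat.mod_le v n
    _ < n₁ := hv

lemma Representable.mod_lt {n n₁ y : ℕ} {A : Finset ℕ} (hy : Representable n A y)
    (hA : ∀ d ∈ A, d % n < n₁) (h₁ : 0 < n₁) : y % n < n₁ := by
  obtain ⟨l, hdig, -, rfl⟩ := hy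
  rw [Nat.ofDigits_mod_eq_head!]
  cases l with
  | nil => simpa using h₁
  | cons d t => exact hA d (hdig d List.mem_cons_self)

lemma not_sub_modEq_mul_of_mod_lt {n₁ n₂ y y' u : ℕ} (hy : y % (n₁ * n₂) < n₁)
    (hy' : y' % (n₁ * n₂) < n₁) (hu₁ : 1 ≤ u) (hu₂ : u < n₂) :
    ¬ ((y : ℤ) - y' ≡ (u * n₁ : ℕ) [ZMOD (n₁ * n₂ : ℕ)]) := by
  intro h
  have hnat : y ≡ y' + u * n₁ [MOD n₁ * n₂] :=
    Int.natCast_modEq_iff.mp (by simpa [add_comm] using h.add_right (y' : ℤ))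
  have hgap : y' % (n₁ * n₂) + u * n₁ < n₁ * n₂ := by
    calc y' % (n₁ * n₂) + u * n₁ < n₁ + u * n₁ := by omega
      _ = n₁ * (u + 1) := by ring
      _ ≤ n₁ * n₂ := Nat.mul_le_mul_left n₁ hu₂
  have heq : y % (n₁ * n₂) = y' % (n₁ * n₂) + u * n₁ := by
    rw [hnat, ← Nat.mod_add_mod, Nat.mod_eq_of_lt hgap]
  have : n₁ ≤ u * n₁ := Nat.le_mul_of_pos_left n₁ hu₁
  omega

theorem stmt8_general (n₁ n₂ : ℕ) (h₁ : 1 < n₁) (n : ℕ) (hn : n = n₁ * n₂)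
    (A : Finset ℕ)
    (hA : A = (Finset.range n₂ ×ˢ Finset.range n₁).image
      (fun p => p.1 * n₁ * n + p.2))
    (y y' : ℕ) (hy : Representable n A y) (hy' : Representable n A y') :
    ∀ u : ℕ, 1 ≤ u → u < n₂ → ¬ ((y : ℤ) - (y' : ℤ) ≡ (u * n₁ : ℕ) [ZMOD n]) := by
  intro u hu₁ hu₂
  have hdigits : ∀ d ∈ A, d % n < n₁ := fun d hd => mod_lt_of_mem_image_mul_add (hA ▸ hd)
  subst hn
  exact not_sub_modEq_mul_of_mod_lt (hy.mod_lt hdigits (by omega))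
    (hy'.mod_lt hdigits (by omega)) hu₁ hu₂

theorem stmt8 (n₁ n₂ : ℕ) (h₁ : 1 < n₁) (h₂ : 1 < n₂) (n : ℕ) (hn : n = n₁ * n₂)
    (A : Finset ℕ)
    (hA : A = (Finset.range n₂ ×ˢ Finset.range n₁).image
      (fun p => p.1 * n₁ * n + p.2))
    (y y' : ℕ) (hy : Representable n A y) (hy' : Representable n A y') :
    ∀ u : ℕ, 1 ≤ u → u < n₂ → ¬ ((y : ℤ) - (y' : ℤ) ≡ (u * n₁ : ℕ) [ZMOD n]) :=
  stmt8_general n₁ n₂ h₁ n hn A hA y y' hy hy'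
end

section
/- Let n ≥ 2 and let A = {a₁,…,aₙ} be n nonnegative integers that are pairwise distinct modulo n. Then every nonnegative integer has at most one A-expansion in base n with digits from A. -/
private lemma ofDigits_zero_nil (n : ℕ) (hn : 0 < n) :
    ∀ l : List ℕ, Nat.ofDigits n l = 0 → l.getLast? ≠ some 0 → l = [] := by
  intro l
  induction l with
  | nil => intro _ _; rfl
  | cons d t ih =>
    intro hv hlast
    rw [Nat.ofDigits_cons] at hv
    have hd : d = 0 ∧ n * Nat.ofDigits n t = 0 := by omega
    have ht : Nat.ofDigits n t = 0 := by
      rcases Nat.mul_eq_zero.mp hd.2 with h | h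
      · omega
      · exact h
    cases t with
    | nil => exact absurd (by simp [hd.1]) hlast
    | cons e t' =>
      have : (e :: t') = [] := ih ht (by rwa [List.getLast?_cons_cons] at hlast)
      simp at this

private lemma key (n : ℕ) (hn : 2 ≤ n) (A : Finset ℕ)
    (hA : ∀ d₁ ∈ A, ∀ d₂ ∈ A, d₁ % n = d₂ % n → d₁ = d₂) :
    ∀ l₁ l₂ : List ℕ, (∀ d ∈ l₁, d ∈ A) → (∀ d ∈ l₂, d ∈ A) →
      l₁.getLast? ≠ some 0 → l₂.getLast? ≠ some 0 →
      Nat.ofDigits n l₁ = Nat.ofDigits n l₂ → l₁ = l₂ := by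
  intro l₁
  induction l₁ with
  | nil =>
    intro l₂ _ _ _ hlast₂ hv
    exact (ofDigits_zero_nil n (by omega) l₂ (by simp at hv; omega) hlast₂).symm
  | cons d₁ t₁ ih =>
    intro l₂ hmem₁ hmem₂ hlast₁ hlast₂ hv
    cases l₂ with
    | nil =>
      exact ofDigits_zero_nil n (by omega) (d₁ :: t₁) (by simpa using hv) hlast₁
    | cons d₂ t₂ =>
      rw [Nat.ofDigits_cons, Nat.ofDigits_cons] at hv
      have hd : d₁ = d₂ := by
        apply hA d₁ (hmem₁ d₁ (by simp)) d₂ (hmem₂ d₂ (by simp))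
        rw [← Nat.add_mul_mod_self_left d₁ n (Nat.ofDigits n t₁), hv,
          Nat.add_mul_mod_self_left]
      subst hd
      have ht : Nat.ofDigits n t₁ = Nat.ofDigits n t₂ := by
        have hn0 : 0 < n := by omega
        exact Nat.eq_of_mul_eq_mul_left hn0 (by omega)
      have hlt₁ : t₁.getLast? ≠ some 0 := by
        cases t₁ with
        | nil => simp
        | cons e t => rwa [List.getLast?_cons_cons] at hlast₁
      have hlt₂ : t₂.getLast? ≠ some 0 := by
        cases t₂ with
        | nil => simp
        | cons e t => rwa [List.getLast?_cons_cons] at hlast₂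
      have := ih t₂ (fun d hd => hmem₁ d (by simp [hd])) (fun d hd => hmem₂ d (by simp [hd]))
        hlt₁ hlt₂ ht
      rw [this]

theorem stmt10 (n : ℕ) (hn : 2 ≤ n) (a : Fin n → ℕ)
    (hres : ∀ i j : Fin n, a i % n = a j % n → i = j) :
    UniqueExpansions n (Finset.image a Finset.univ) := by
  intro k l₁ l₂ ⟨hm₁, hl₁, hv₁⟩ ⟨hm₂, hl₂, hv₂⟩
  refine key n hn _ ?_ l₁ l₂ hm₁ hm₂ hl₁ hl₂ (by rw [hv₁, hv₂])
  intro d₁ hd₁ d₂ hd₂ h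
  simp only [Finset.mem_image, Finset.mem_univ, true_and] at hd₁ hd₂
  obtain ⟨i, rfl⟩ := hd₁
  obtain ⟨j, rfl⟩ := hd₂
  rw [hres i j h]
end

section
/- Let p be prime, m ≥ 1, and let ã₁,…,ã_p be integers with 0 ≤ ãⱼ < p^m. Suppose every primitive p^m-th root of unity is a root of the polynomial P̃(z) = Σ_{j=1}^{p} z^{ãⱼ}. Then there exists u with 0 ≤ u < p^{m−1} such that the multiset {ã₁,…,ã_p} equals {u, u + p^{m−1}, u + 2p^{m−1}, …, u + (p−1)p^{m−1}}. -/
/-!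
Write `Φ = Φ_{p^m} = ∑_{j<p} X^{j p^{m-1}}` and `F = ∑_j X^{a_j}`. Since `Φ` is the minimal
polynomial over `ℤ` of a primitive `p^m`-th root of unity, `F = Φ R` with `R ∈ ℤ[X]`, and comparing
degrees gives `deg R < p^{m-1}`. As `Φ ≡ 1 mod X^{p^{m-1}}`, the coefficients of `R` are
coefficients of `F`, hence nonnegative integers, while evaluating at `1` gives `p · R(1) = p`.
So `R = X^u`, and the exponents of `F = X^u Φ` are exactly the `u + j p^{m-1}`.
-/
open Polynomial

namespace Polynomial

theorem exists_eq_X_pow_of_coeff_nonneg_of_eval_one {R : ℤ[X]} (hnonneg : ∀ k, 0 ≤ R.coeff k)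
    (h1 : R.eval 1 = 1) : ∃ u, R = X ^ u := by
  have hsum : ∑ k ∈ R.support, R.coeff k = 1 := by
    simpa [eval_eq_sum, sum_def] using h1
  have hcoeff : ∀ k ∈ R.support, R.coeff k = 1 := fun k hk => by
    have hle := hsum ▸ Finset.single_le_sum (fun i _ => hnonneg i) hk
    have hne := mem_support_iff.mp hk
    have hnn := hnonneg k
    omega
  have hcard : R.support.card = 1 := by
    rw [Finset.sum_congr rfl hcoeff] at hsum
    exact_mod_cast (by simpa using hsum)
  obtain ⟨u, c, -, rfl⟩ := card_support_eq_one.mp hcard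
  exact ⟨u, by simp_all⟩

theorem coeff_cyclotomic_prime_pow_mul_of_lt {R : Type*} [CommRing R] {p n k : ℕ} (hp : p.Prime)
    (G : R[X]) (hk : k < p ^ n) : (cyclotomic (p ^ (n + 1)) R * G).coeff k = G.coeff k := by
  rw [cyclotomic_prime_pow_eq_geom_sum hp, Finset.sum_mul, finsetSum_coeff,
    Finset.sum_eq_single 0]
  · simp
  · intro i _ hi
    rw [← pow_mul, coeff_X_pow_mul', if_neg]
    have : p ^ n ≤ p ^ n * i := Nat.le_mul_of_pos_right _ (Nat.pos_of_ne_zero hi)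
    omega
  · simp [hp.pos]

theorem cyclotomic_dvd_of_aeval_eq_zero {K : Type*} [Field K] [CharZero K] {μ : K} {n : ℕ}
    (h : IsPrimitiveRoot μ n) (hpos : 0 < n) {F : ℤ[X]} (hF : aeval μ F = 0) :
    cyclotomic n ℤ ∣ F :=
  cyclotomic_eq_minpoly h hpos ▸ minpoly.isIntegrallyClosed_dvd (h.isIntegral hpos) hF

theorem exists_eq_X_pow_mul_cyclotomic_prime_pow {p n : ℕ} (hp : p.Prime) {F : ℤ[X]}
    (hnonneg : ∀ k, 0 ≤ F.coeff k) (hdeg : F.natDegree < p ^ (n + 1)) (heval : F.eval 1 = p)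
    (hdvd : cyclotomic (p ^ (n + 1)) ℤ ∣ F) :
    ∃ u < p ^ n, F = X ^ u * cyclotomic (p ^ (n + 1)) ℤ := by
  have := Fact.mk hp
  obtain ⟨R, rfl⟩ := hdvd
  have hR1 : R.eval 1 = 1 := by
    rw [eval_mul, eval_one_cyclotomic_prime_pow] at heval
    exact mul_left_cancel₀ (by exact_mod_cast hp.ne_zero) (heval.trans (mul_one _).symm)
  have hR0 : R ≠ 0 := by rintro rfl; simp at hR1
  have hRdeg : R.natDegree < p ^ n := by
    rw [natDegree_mul (cyclotomic_ne_zero _ ℤ) hR0, natDegree_cyclotomic,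
      Nat.totient_prime_pow_succ hp, pow_succ] at hdeg
    have : p ^ n * p = p ^ n * (p - 1) + p ^ n := by
      rw [← Nat.mul_add_one, Nat.sub_add_cancel hp.one_le]
    omega
  have hRnonneg : ∀ k, 0 ≤ R.coeff k := fun k => by
    rcases lt_or_ge k (p ^ n) with hk | hk
    · exact coeff_cyclotomic_prime_pow_mul_of_lt hp R hk ▸ hnonneg k
    · rw [coeff_eq_zero_of_natDegree_lt (hRdeg.trans_le hk)]
  obtain ⟨u, rfl⟩ := exists_eq_X_pow_of_coeff_nonneg_of_eval_one hRnonneg hR1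
  exact ⟨u, by simpa using hRdeg, mul_comm _ _⟩

end Polynomial

namespace Multiset

noncomputable def generatingPoly (R : Type*) [Semiring R] (S : Multiset ℕ) : R[X] :=
  (S.map (X ^ ·)).sum

variable {R : Type*} [Semiring R]

@[simp]
theorem coeff_generatingPoly (S : Multiset ℕ) (k : ℕ) :
    (generatingPoly R S).coeff k = S.count k := by
  induction S using Multiset.induction_on with
  | empty => simp [generatingPoly]
  | cons s S ih =>
    simp only [generatingPoly] at ih ⊢
    rw [map_cons, sum_cons, coeff_add, ih, coeff_X_pow, count_cons]
    split_ifs <;> simp_all [add_comm]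

theorem generatingPoly_injective [CharZero R] : Function.Injective (generatingPoly R) :=
  fun S T h => Multiset.ext.mpr fun k => by
    simpa using congrArg (coeff · k) h

theorem eval_one_generatingPoly (S : Multiset ℕ) : (generatingPoly R S).eval 1 = card S := by
  simp [generatingPoly, eval_multisetSum, X_pow_eq_monomial]

theorem natDegree_generatingPoly_lt [Nontrivial R] {S : Multiset ℕ} {N : ℕ} (hN : 0 < N)
    (hS : ∀ s ∈ S, s < N) : (generatingPoly R S).natDegree < N := by
  have : (generatingPoly R S).natDegree ≤ N - 1 :=
    natDegree_le_iff_coeff_eq_zero.mpr fun k hk => by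
      rw [coeff_generatingPoly, count_eq_zero.mpr fun hmem => (hS k hmem).not_ge (by omega),
        Nat.cast_zero]
  omega

theorem generatingPoly_map_range (u q p : ℕ) :
    generatingPoly R ((range p).map fun j => u + j * q) =
      X ^ u * ∑ j ∈ Finset.range p, (X ^ q) ^ j := by
  rw [generatingPoly, map_map, Finset.mul_sum, Finset.sum_eq_multiset_sum, Finset.range_val]
  simp only [Function.comp_def, pow_add, pow_mul']

theorem aeval_generatingPoly {R A : Type*} [CommSemiring R] [Semiring A] [Algebra R A] (x : A)
    (S : Multiset ℕ) : aeval x (generatingPoly R S) = (S.map (x ^ ·)).sum := by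
  simp [generatingPoly, map_multiset_sum, map_map]

theorem eq_map_range_of_cyclotomic_dvd {p n : ℕ} (hp : p.Prime) {S : Multiset ℕ}
    (hcard : card S = p) (hS : ∀ s ∈ S, s < p ^ (n + 1))
    (hdvd : cyclotomic (p ^ (n + 1)) ℤ ∣ generatingPoly ℤ S) :
    ∃ u < p ^ n, S = (range p).map fun j => u + j * p ^ n := by
  obtain ⟨u, hu, hF⟩ := exists_eq_X_pow_mul_cyclotomic_prime_pow hp
    (fun k => by simp) (natDegree_generatingPoly_lt (pow_pos hp.pos _) hS)
    (by rw [eval_one_generatingPoly, hcard]) hdvd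
  refine ⟨u, hu, generatingPoly_injective (R := ℤ) ?_⟩
  rw [hF, generatingPoly_map_range, cyclotomic_prime_pow_eq_geom_sum hp]

end Multiset

theorem stmt11 (p : ℕ) (hp : p.Prime) (m : ℕ) (hm : 1 ≤ m) (a : Fin p → ℕ)
    (ha : ∀ j, a j < p ^ m)
    (hroot : ∀ z : ℂ, IsPrimitiveRoot z (p ^ m) → ∑ j, z ^ (a j) = 0) :
    ∃ u < p ^ (m - 1),
      Multiset.map a Finset.univ.val =
        Multiset.map (fun j => u + j * p ^ (m - 1)) (Multiset.range p) := by
  obtain ⟨n, rfl⟩ := Nat.exists_eq_add_of_le' hm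
  have hpos : 0 < p ^ (n + 1) := pow_pos hp.pos _
  obtain ⟨ζ, hζ⟩ : ∃ z : ℂ, IsPrimitiveRoot z (p ^ (n + 1)) :=
    ⟨_, Complex.isPrimitiveRoot_exp _ hpos.ne'⟩
  have hdvd : cyclotomic (p ^ (n + 1)) ℤ ∣ (Finset.univ.val.map a).generatingPoly ℤ :=
    cyclotomic_dvd_of_aeval_eq_zero hζ hpos <| by
      rw [Multiset.aeval_generatingPoly, Multiset.map_map]
      exact hroot ζ hζ
  simpa using Multiset.eq_map_range_of_cyclotomic_dvd hp (by simp) (by simpa using ha) hdvd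
end
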